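/- The function κ is differentiable at the point (a*, 1) with a* = 5/2, and its partial derivatives there satisfy (∂κ/∂a)(5/2, 1) = 0 and (5/2)·(∂κ/∂b)(5/2, 1) = (1/2) log(9/5). -/

import Mathlib

/-!
The supremum `S(a, b)` of `f_{a,b}` over `D_{a,b}` is squeezed between `f_{a,b}(1/2, 1/6)`, which
is smooth in `(a, b)` near `(5/2, 1)`, and an affine function of `(a, b)` obtained by applying
Gibbs' inequality to the three multinomial entropies making up `f_{a,b}`. Both bounds equal
`(5/4) log 5` at `(5/2, 1)`, so `S` is differentiable there with the gradient of the affine bound,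
`(log 5 / 2, log (9/5) / 2)`, and the quotient rule for `κ = S / a` gives the two partial
derivatives.
-/

noncomputable def fab (a b : ℝ) (p : ℝ × ℝ) : ℝ :=
  b * Real.log b - 2 * p.1 * Real.log p.1
    + ((a + 1 - b) / 2) * Real.log ((a + 1 - b) / 2)
    - ((a + 1 - b) / 2 - p.1) * Real.log ((a + 1 - b) / 2 - p.1)
    - 2 * p.2 * Real.log p.2
    - (b - p.1 - p.2) * Real.log (b - p.1 - p.2)
    + ((a - 1 - b) / 2) * Real.log ((a - 1 - b) / 2)
    - ((a - 1 - b) / 2 - p.2) * Real.log ((a - 1 - b) / 2 - p.2)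

/-- The domain `D_{a,b}` of `f_{a,b}`. -/
def Dab (a b : ℝ) : Set (ℝ × ℝ) :=
  {p | 0 ≤ p.1 ∧ 0 ≤ p.2 ∧ p.1 + p.2 ≤ b ∧ p.1 ≤ (a + 1 - b) / 2 ∧ p.2 ≤ (a - 1 - b) / 2}

/-- The entropy per step `κ(a,b) = (1/a) · sup_{(δ,ε) ∈ D_{a,b}} f_{a,b}(δ,ε)`. -/
noncomputable def kappa (a b : ℝ) : ℝ := (1 / a) * sSup (fab a b '' Dab a b)

open Real Finset Topology Asymptotics ContinuousLinearMap

theorem HasFDerivAt.of_eventually_le_le {E : Type*} [NormedAddCommGroup E] [NormedSpace ℝ E]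
    {l s u : E → ℝ} {l' u' : E →L[ℝ] ℝ} {x : E} (hl : HasFDerivAt l l' x)
    (hu : HasFDerivAt u u' x) (hls : l ≤ᶠ[𝓝 x] s) (hsu : s ≤ᶠ[𝓝 x] u) (hx : l x = u x) :
    HasFDerivAt s u' x := by
  have hsx : s x = l x := le_antisymm (hx ▸ hsu.self_of_nhds) hls.self_of_nhds
  have hmin : IsLocalMin (fun y => u y - l y) x := by
    filter_upwards [hls, hsu] with y h1 h2
    linarith
  have hl' : HasFDerivAt l u' x :=
    hl.congr_fderiv (sub_eq_zero.1 (hmin.hasFDerivAt_eq_zero (hu.sub hl))).symm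
  have hgap : (fun y => u y - l y) =o[𝓝 x] (fun y => y - x) := by
    simpa [hx] using (hu.sub hl').isLittleO
  have hsl : (fun y => s y - l y) =o[𝓝 x] (fun y => y - x) := by
    refine IsBigO.trans_isLittleO (IsBigO.of_bound 1 ?_) hgap
    filter_upwards [hls, hsu] with y h1 h2
    rw [one_mul, Real.norm_of_nonneg (sub_nonneg.2 h1), Real.norm_of_nonneg (by linarith)]
    linarith
  have hsl' : HasFDerivAt (fun y => s y - l y) (0 : E →L[ℝ] ℝ) x :=
    .of_isLittleO (by simpa [hsx] using hsl)
  simpa using hl'.fun_add hsl'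

lemma mul_log_sub_mul_log_le {w c : ℝ} (hw : 0 ≤ w) (hc : 0 < c) :
    w * log c - w * log w ≤ c - w := by
  rcases hw.eq_or_lt with rfl | hw
  · simpa using hc.le
  · have h := log_le_sub_one_of_pos (div_pos hc hw)
    rw [log_div hc.ne' hw.ne'] at h
    calc w * log c - w * log w = w * (log c - log w) := by ring
      _ ≤ w * (c / w - 1) := by gcongr
      _ = c - w := by field_simp

theorem entropy_le_crossEntropy {ι : Type*} (s : Finset ι) {w c : ι → ℝ}
    (hw : ∀ i ∈ s, 0 ≤ w i) (hc : ∀ i ∈ s, 0 < c i) :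
    (∑ i ∈ s, w i) * log (∑ i ∈ s, w i) - ∑ i ∈ s, w i * log (w i)
      ≤ (∑ i ∈ s, w i) * log (∑ i ∈ s, c i) - ∑ i ∈ s, w i * log (c i) := by
  set W := ∑ i ∈ s, w i
  set C := ∑ i ∈ s, c i
  rcases (sum_nonneg hw).eq_or_lt with hW | hW
  · have hw0 : ∀ i ∈ s, w i = 0 := (sum_eq_zero_iff_of_nonneg hw).1 hW.symm
    have h0 : ∀ f : ι → ℝ, ∑ i ∈ s, w i * f i = 0 := fun f =>
      sum_eq_zero fun i hi => by rw [hw0 i hi, zero_mul]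
    rw [h0, h0, show W = 0 from hW.symm]
    simp
  have hC : 0 < C := sum_pos hc (nonempty_of_sum_ne_zero hW.ne')
  have hlog : ∀ i ∈ s, log (c i * W / C) = log (c i) + log W - log C := fun i hi => by
    rw [log_div (by have := hc i hi; positivity) hC.ne', log_mul (hc i hi).ne' hW.ne']
  have key : ∑ i ∈ s, (w i * log (c i * W / C) - w i * log (w i)) ≤ ∑ i ∈ s, (c i * W / C - w i) :=
    sum_le_sum fun i hi => mul_log_sub_mul_log_le (hw i hi) (by have := hc i hi; positivity)
  rw [sum_congr rfl fun i hi => by rw [hlog i hi], sum_sub_distrib, sum_sub_distrib,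
    ← sum_div, ← sum_mul, mul_div_cancel_left₀ W hC.ne'] at key
  have hsplit : ∑ i ∈ s, w i * (log (c i) + log W - log C)
      = ∑ i ∈ s, w i * log (c i) + W * log W - W * log C := by
    simp only [mul_sub, mul_add, sum_sub_distrib, sum_add_distrib, ← sum_mul]
    rfl
  linarith

lemma entropy_two_le {A d x : ℝ} (hd : 0 ≤ d) (hdA : d ≤ A) (hx : 0 < x) :
    A * log A - d * log d - (A - d) * log (A - d) ≤ A * log (1 + x) - d * log x := by
  have h := entropy_le_crossEntropy univ (w := ![d, A - d]) (c := ![x, 1])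
    (by simp [Fin.forall_fin_two, hd, hdA]) (by simp [Fin.forall_fin_two, hx])
  simp only [Fin.sum_univ_two, Matrix.cons_val_zero, Matrix.cons_val_one, log_one,
    mul_zero, add_zero, add_sub_cancel] at h
  rw [add_comm x] at h
  linarith

lemma entropy_three_le {b d e u v : ℝ} (hd : 0 ≤ d) (he : 0 ≤ e) (hde : d + e ≤ b)
    (hu : 0 < u) (hv : 0 < v) :
    b * log b - d * log d - e * log e - (b - d - e) * log (b - d - e)
      ≤ b * log (1 + u + v) - d * log u - e * log v := by
  have h := entropy_le_crossEntropy univ (w := ![d, e, b - d - e]) (c := ![u, v, 1])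
    (by simp [Fin.forall_fin_succ, hd, he]; linarith) (by simp [Fin.forall_fin_succ, hu, hv])
  simp only [Fin.sum_univ_three, Matrix.cons_val_zero, Matrix.cons_val_one, Matrix.cons_val_two,
    Matrix.tail_cons, Matrix.head_cons, log_one, mul_zero, add_zero] at h
  rw [show d + e + (b - d - e) = b by ring, show u + v + 1 = 1 + u + v by ring] at h
  linarith

/-- Sum of Gibbs bounds on the three entropies of `fab` with reference weights `(u, v, 1)`,
`(u⁻¹, 1)` and `(v⁻¹, 1)`; the reciprocal weights make the `δ`- and `ε`-terms cancel. -/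
noncomputable def fabUpper (u v a b : ℝ) : ℝ :=
  b * log (1 + u + v) + (a + 1 - b) / 2 * log (1 + u⁻¹) + (a - 1 - b) / 2 * log (1 + v⁻¹)

lemma fab_le_fabUpper {a b u v : ℝ} {p : ℝ × ℝ} (hp : p ∈ Dab a b) (hu : 0 < u) (hv : 0 < v) :
    fab a b p ≤ fabUpper u v a b := by
  obtain ⟨hd, he, hde, hdA, heB⟩ := hp
  have h3 := entropy_three_le hd he hde hu hv
  have hA := entropy_two_le hd hdA (inv_pos.2 hu)
  have hB := entropy_two_le he heB (inv_pos.2 hv)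
  rw [log_inv] at hA hB
  unfold fab fabUpper
  linarith

lemma bddAbove_fab (a b : ℝ) : BddAbove (fab a b '' Dab a b) :=
  ⟨fabUpper 1 1 a b, Set.forall_mem_image.2 fun _ hp => fab_le_fabUpper hp one_pos one_pos⟩

lemma fab_le_sSup {a b : ℝ} {p : ℝ × ℝ} (hp : p ∈ Dab a b) :
    fab a b p ≤ sSup (fab a b '' Dab a b) :=
  le_csSup (bddAbove_fab a b) (Set.mem_image_of_mem _ hp)

lemma sSup_fab_le_fabUpper {a b u v : ℝ} {p : ℝ × ℝ} (hp : p ∈ Dab a b) (hu : 0 < u) (hv : 0 < v) :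
    sSup (fab a b '' Dab a b) ≤ fabUpper u v a b :=
  csSup_le ⟨_, Set.mem_image_of_mem _ hp⟩ <|
    Set.forall_mem_image.2 fun _ hq => fab_le_fabUpper hq hu hv

/-- The derivative at `(a, b)` of `Φ(b, (a + 1 - b) / 2, (a - 1 - b) / 2)` when `Φ` has partial
derivatives `lb`, `lA`, `lB`. -/
noncomputable def paramGrad (lb lA lB : ℝ) : ℝ × ℝ →L[ℝ] ℝ :=
  lb • snd ℝ ℝ ℝ + ((lA + lB) / 2) • (fst ℝ ℝ ℝ - snd ℝ ℝ ℝ)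

@[simp]
lemma paramGrad_apply (lb lA lB : ℝ) (h : ℝ × ℝ) :
    paramGrad lb lA lB h = lb * h.2 + (lA + lB) / 2 * (h.1 - h.2) := rfl

lemma hasFDerivAt_add_sub_div_two (c : ℝ) (x : ℝ × ℝ) :
    HasFDerivAt (fun q : ℝ × ℝ => (q.1 + c - q.2) / 2)
      ((1 / 2 : ℝ) • (fst ℝ ℝ ℝ - snd ℝ ℝ ℝ)) x :=
  (((1 / 2 : ℝ) • (fst ℝ ℝ ℝ - snd ℝ ℝ ℝ)).hasFDerivAt.add_const (c / 2)).congr_of_eventuallyEq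
    (.of_eq (funext fun q => by simp; ring))

lemma hasFDerivAt_fabUpper (u v : ℝ) (x : ℝ × ℝ) :
    HasFDerivAt (fun q : ℝ × ℝ => fabUpper u v q.1 q.2)
      (paramGrad (log (1 + u + v)) (log (1 + u⁻¹)) (log (1 + v⁻¹))) x := by
  have h := ((hasFDerivAt_snd.mul_const (log (1 + u + v))).add
    ((hasFDerivAt_add_sub_div_two 1 x).mul_const (log (1 + u⁻¹)))).add
    ((hasFDerivAt_add_sub_div_two (-1) x).mul_const (log (1 + v⁻¹)))
  refine (h.congr_fderiv ?_).congr_of_eventuallyEq (.of_eq (funext fun q => ?_))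
  · ext <;> simp <;> ring
  · simp only [fabUpper, Pi.add_apply]; ring

lemma differentiableAt_fab_param {a b : ℝ} {p : ℝ × ℝ} (hd : 0 ≤ p.1) (he : 0 ≤ p.2)
    (hde : p.1 + p.2 < b) (hdA : p.1 < (a + 1 - b) / 2) (heB : p.2 < (a - 1 - b) / 2) :
    DifferentiableAt ℝ (fun q : ℝ × ℝ => fab q.1 q.2 p) (a, b) := by
  unfold fab
  fun_prop (disch := (apply ne_of_gt; dsimp only; linarith))

lemma eventually_mem_Dab {a b : ℝ} {p : ℝ × ℝ} (hd : 0 ≤ p.1) (he : 0 ≤ p.2)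
    (hde : p.1 + p.2 < b) (hdA : p.1 < (a + 1 - b) / 2) (heB : p.2 < (a - 1 - b) / 2) :
    ∀ᶠ q : ℝ × ℝ in 𝓝 (a, b), p ∈ Dab q.1 q.2 := by
  have hopen : IsOpen {q : ℝ × ℝ |
      p.1 + p.2 < q.2 ∧ p.1 < (q.1 + 1 - q.2) / 2 ∧ p.2 < (q.1 - 1 - q.2) / 2} := by
    simp only [Set.ofPred_and]
    exact (isOpen_lt continuous_const (by fun_prop)).inter
      ((isOpen_lt continuous_const (by fun_prop)).inter (isOpen_lt continuous_const (by fun_prop)))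
  filter_upwards [hopen.mem_nhds ⟨hde, hdA, heB⟩] with q hq
  exact ⟨hd, he, hq.1.le, hq.2.1.le, hq.2.2.le⟩

theorem hasFDerivAt_sSup_fab {a b u v : ℝ} {p : ℝ × ℝ} (hd : 0 ≤ p.1) (he : 0 ≤ p.2)
    (hde : p.1 + p.2 < b) (hdA : p.1 < (a + 1 - b) / 2) (heB : p.2 < (a - 1 - b) / 2)
    (hu : 0 < u) (hv : 0 < v) (heq : fab a b p = fabUpper u v a b) :
    HasFDerivAt (fun q : ℝ × ℝ => sSup (fab q.1 q.2 '' Dab q.1 q.2))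
      (paramGrad (log (1 + u + v)) (log (1 + u⁻¹)) (log (1 + v⁻¹))) (a, b) := by
  have hp := eventually_mem_Dab hd he hde hdA heB
  exact (differentiableAt_fab_param hd he hde hdA heB).hasFDerivAt.of_eventually_le_le
    (hasFDerivAt_fabUpper u v (a, b)) (hp.mono fun _ hq => fab_le_sSup hq)
    (hp.mono fun _ hq => sSup_fab_le_fabUpper hq hu hv) heq

/-- `(1/2, 1/6)` is the point of `D_{5/2,1}` at which all three Gibbs bounds are equalities. -/
lemma fab_eq_fabUpper : fab (5 / 2) 1 (1 / 2, 1 / 6) = fabUpper (3 / 2) (1 / 2) (5 / 2) 1 := by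
  have h4 : log 4 = 2 * log 2 := by
    rw [show (4 : ℝ) = 2 ^ 2 by norm_num, log_pow]; norm_num
  have h6 : log 6 = log 2 + log 3 := by
    rw [show (6 : ℝ) = 2 * 3 by norm_num, log_mul two_ne_zero three_ne_zero]
  have h12 : log 12 = log 4 + log 3 := by
    rw [show (12 : ℝ) = 4 * 3 by norm_num, log_mul four_ne_zero three_ne_zero]
  norm_num [fab, fabUpper, log_div, log_inv, h4, h6, h12]
  ring

theorem stmt5 :
    DifferentiableAt ℝ (fun p : ℝ × ℝ => kappa p.1 p.2) ((5 / 2 : ℝ), (1 : ℝ)) ∧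
    fderiv ℝ (fun p : ℝ × ℝ => kappa p.1 p.2) ((5 / 2 : ℝ), (1 : ℝ)) (1, 0) = 0 ∧
    (5 / 2 : ℝ) * fderiv ℝ (fun p : ℝ × ℝ => kappa p.1 p.2) ((5 / 2 : ℝ), (1 : ℝ)) (0, 1)
      = (1 / 2) * Real.log (9 / 5) := by
  have hmem : ((1 / 2 : ℝ), (1 / 6 : ℝ)) ∈ Dab (5 / 2) 1 := by norm_num [Dab]
  have hS := hasFDerivAt_sSup_fab (a := 5 / 2) (b := 1) (by norm_num) (by norm_num) (by norm_num)
    (by norm_num) (by norm_num) (by norm_num : (0 : ℝ) < 3 / 2) (by norm_num : (0 : ℝ) < 1 / 2)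
    fab_eq_fabUpper
  have hS₀ : sSup (fab (5 / 2) 1 '' Dab (5 / 2) 1) = fabUpper (3 / 2) (1 / 2) (5 / 2) 1 :=
    le_antisymm (sSup_fab_le_fabUpper hmem (by norm_num) (by norm_num))
      (fab_eq_fabUpper ▸ fab_le_sSup hmem)
  have hinv : HasFDerivAt (fun q : ℝ × ℝ => 1 / q.1) ((-((5 / 2 : ℝ) ^ 2)⁻¹) • fst ℝ ℝ ℝ)
      ((5 / 2 : ℝ), (1 : ℝ)) :=
    ((hasDerivAt_inv (by norm_num : (5 / 2 : ℝ) ≠ 0)).comp_hasFDerivAt ((5 / 2 : ℝ), (1 : ℝ))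
      hasFDerivAt_fst).congr_of_eventuallyEq (.of_eq (funext fun q => one_div q.1))
  have hκ : HasFDerivAt (fun q : ℝ × ℝ => kappa q.1 q.2) _ _ := hinv.fun_mul hS
  have h95 : log (9 / 5) = log 3 - log (5 / 3) := by rw [← log_div] <;> norm_num
  refine ⟨hκ.differentiableAt, ?_, ?_⟩ <;> rw [hκ.fderiv] <;> norm_num [hS₀, fabUpper]
  · ring
  · rw [h95]; ring
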